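/- For 0 < ν < 1 and η ≥ 0, with λ = 2√ν·cosh η and y_c = −e^{η}/√ν, the following identity holds: W(y_c, ν, λ) = −(1−ν)·e^{−2η}·(e^{4η} − ν)·(1 − e^{2η}ν)². Consequently, if moreover λ < 1+ν (equivalently e^{2η}ν ≠ 1 in this range), then W(y_c,ν,λ) < 0. -/

import Mathlib

/-! With `s = √ν` and `a = e^η` we have `λ = s (a + a⁻¹)` and `y_c = -a / s`, so the identity is a
rational-function identity in `s` and `a`. For the sign, every factor has a fixed sign once
`0 < ν < 1 ≤ e^η`, except `(1 - e^{2η} ν)²`, which vanishes exactly when `√ν = e^{-η}`, i.e. when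
`λ = 1 + ν`. -/

noncomputable def W (v l y : ℝ) : ℝ :=
  l^2*v^4*y^4 + 2*l*v^2*(l^2 + v^2 - 1)*y^3
    - v*(1 - 2*v*l^2 - l^4 + v^4 - 2*v^2)*y^2
    + 2*v*l*(1 + l^2 - v^2)*y + l^2

lemma W_sq_mul_add_inv {s a : ℝ} (hs : s ≠ 0) (ha : a ≠ 0) :
    W (s^2) (s * (a + a⁻¹)) (-(a / s)) =
      -(1 - s^2) * (a^2)⁻¹ * (a^4 - s^2) * (1 - a^2 * s^2)^2 := by
  rw [W]
  field_simp
  ring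

lemma exp_two_mul_eq_sq (η : ℝ) : Real.exp (2*η) = Real.exp η ^ 2 := by
  rw [← Real.exp_nat_mul]; norm_num

lemma two_mul_cosh_eq_add_inv (η : ℝ) : 2 * Real.cosh η = Real.exp η + (Real.exp η)⁻¹ := by
  rw [Real.cosh_eq, Real.exp_neg]; ring

lemma W_two_mul_sqrt_mul_cosh {v : ℝ} (hv : 0 < v) (η : ℝ) :
    W v (2 * Real.sqrt v * Real.cosh η) (-(Real.exp η / Real.sqrt v)) =
      -(1 - v) * Real.exp (-2*η) * (Real.exp (4*η) - v) * (1 - Real.exp (2*η) * v)^2 := by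
  obtain ⟨s, hs, rfl⟩ : ∃ s > 0, s^2 = v := ⟨_, Real.sqrt_pos.mpr hv, Real.sq_sqrt hv.le⟩
  have h4 : Real.exp (4*η) = Real.exp η ^ 4 := by rw [← Real.exp_nat_mul]; norm_num
  rw [Real.sqrt_sq hs.le, mul_comm 2 s, mul_assoc, two_mul_cosh_eq_add_inv,
    W_sq_mul_add_inv hs.ne' (Real.exp_pos η).ne', neg_mul 2 η, Real.exp_neg, h4, exp_two_mul_eq_sq]

lemma two_mul_sqrt_mul_cosh_of_exp_mul_eq_one {v η : ℝ} (h : Real.exp (2*η) * v = 1) :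
    2 * Real.sqrt v * Real.cosh η = 1 + v := by
  have ha := (Real.exp_pos η).ne'
  rw [exp_two_mul_eq_sq] at h
  have hv : v = (Real.exp η)⁻¹ ^ 2 := by field_simp; linarith
  rw [hv, Real.sqrt_sq (by positivity), mul_comm 2, mul_assoc, two_mul_cosh_eq_add_inv]
  field_simp

lemma neg_mul_exp_mul_sq_neg {v η : ℝ} (hv1 : v < 1) (hη : 0 ≤ η)
    (hne : Real.exp (2*η) * v ≠ 1) :
    -(1 - v) * Real.exp (-2*η) * (Real.exp (4*η) - v) * (1 - Real.exp (2*η) * v)^2 < 0 := by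
  have h4 : v < Real.exp (4*η) := hv1.trans_le (Real.one_le_exp (by positivity))
  have hsq : 0 < (1 - Real.exp (2*η) * v)^2 := by positivity
  have := mul_pos (mul_pos (mul_pos (sub_pos.mpr hv1) (Real.exp_pos (-2*η))) (sub_pos.mpr h4)) hsq
  linarith

theorem stmt6 (v η : ℝ) (hv0 : 0 < v) (hv1 : v < 1) (hη : 0 ≤ η) :
    W v (2*Real.sqrt v * Real.cosh η) (-(Real.exp η / Real.sqrt v)) =
      -(1 - v) * Real.exp (-2*η) * (Real.exp (4*η) - v) * (1 - Real.exp (2*η)*v)^2 ∧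
    (2*Real.sqrt v * Real.cosh η < 1 + v →
      W v (2*Real.sqrt v * Real.cosh η) (-(Real.exp η / Real.sqrt v)) < 0) := by
  refine ⟨W_two_mul_sqrt_mul_cosh hv0 η, fun hlt => ?_⟩
  rw [W_two_mul_sqrt_mul_cosh hv0 η]
  exact neg_mul_exp_mul_sq_neg hv1 hη
    fun h => hlt.ne (two_mul_sqrt_mul_cosh_of_exp_mul_eq_one h)
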